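/- arXiv:1511.04302 — 2 statements merged into one kernel-verified Lean document; each statement's English description precedes it below -/
import Mathlib

section
/- For every i ≥ 0, the power series π_i satisfies π_i ∈ p^i π + π² ℤ_p[[π]]; that is, π_i − p^i π, viewed as a power series in π, has all coefficients of degree ≤ 1 equal to 0 except that the identity holds modulo π² ℤ_p[[π]]. -/
open PowerSeries
open scoped Classical

noncomputable section

/-- The power series `Σ_{i≥0} X^(p^i − 1)`, the logarithmic derivative of the
Artin–Hasse exponential. -/
def ahLogDeriv (p : ℕ) (R : Type*) [CommRing R] : PowerSeries R :=
  PowerSeries.mk fun n => if ∃ i : ℕ, n + 1 = p ^ i then 1 else 0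

/-- `E` is the Artin–Hasse exponential `exp(Σ_{i≥0} X^(p^i)/p^i)`: over a characteristic-zero
ring with no additive torsion this is equivalent to `E(0) = 1` together with the logarithmic
differential equation `E' = E · Σ_{i≥0} X^(p^i−1)`. -/
def IsArtinHasse (p : ℕ) {R : Type*} [CommRing R] (E : PowerSeries R) : Prop :=
  PowerSeries.constantCoeff E = 1 ∧
    (PowerSeries.derivative R) E = E * ahLogDeriv p R

/-- Composition `f(g)` of formal power series (intended for `g` with zero constant term,
in which case this is the usual substitution). -/
def psComp {R : Type*} [CommRing R] (f g : PowerSeries R) : PowerSeries R :=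
  PowerSeries.mk fun n => ∑ k ∈ Finset.range (n + 1),
    PowerSeries.coeff k f * PowerSeries.coeff n (g ^ k)

/-- `w = π_i`: the unique power series with zero constant term satisfying
`E(π_i) = (1+T)^(p^i)`. -/
def IsPiAH (p : ℕ) {R : Type*} [CommRing R] (E : PowerSeries R) (i : ℕ)
    (w : PowerSeries R) : Prop :=
  PowerSeries.constantCoeff w = 0 ∧ psComp E w = (1 + PowerSeries.X) ^ p ^ i

/-- `bin z n` is the binomial coefficient `C(z, n)`, characterized by
`n! · bin z n = z(z−1)⋯(z−n+1)`. -/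
def IsBinomial {R : Type*} [CommRing R] (bin : R → ℕ → R) : Prop :=
  ∀ z n, (n.factorial : R) * bin z n = ∏ i ∈ Finset.range n, (z - (i : R))

/-- The binomial series `(1+T)^z = Σ_n C(z,n) Tⁿ`. -/
def onePlusTPow {R : Type*} [CommRing R] (bin : R → ℕ → R) (z : R) : PowerSeries R :=
  PowerSeries.mk fun n => bin z n

/-- `F^z = Σ_n C(z,n) (F−1)ⁿ` for a power series `F` with constant term `1`. -/
def psPow {R : Type*} [CommRing R] (bin : R → ℕ → R) (z : R) (F : PowerSeries R) :
    PowerSeries R :=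
  PowerSeries.mk fun n => ∑ k ∈ Finset.range (n + 1),
    bin z k * PowerSeries.coeff n ((F - 1) ^ k)

/-- The canonical ring map `ℤ_p = W(𝔽_p) → W(F)` for a ring `F` of characteristic `p`. -/
def toWitt (p : ℕ) [Fact p.Prime] (F : Type*) [CommRing F] [CharP F p] :
    ℤ_[p] →+* WittVector p F :=
  (WittVector.map (ZMod.castHom dvd_rfl F)).comp (WittVector.equiv p).symm.toRingHom

/-- `E(cst · η · x^u)` as a power series in `x` whose coefficients are power series
(in the variable of `η`). -/
def EmonoSub {R : Type*} [CommRing R] (E : PowerSeries R) (eta : PowerSeries R) (cst : R)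
    (u : ℕ) : PowerSeries (PowerSeries R) :=
  if u = 0 then PowerSeries.C (psComp E (PowerSeries.C cst * eta))
  else PowerSeries.mk fun v =>
    if u ∣ v then PowerSeries.C (PowerSeries.coeff (v / u) E * cst ^ (v / u)) * eta ^ (v / u)
    else 0

/-- `E_h(x, η) = ∏_{u=0}^{d'} E(η ĥ_u x^u)` for `h` with (lifted) coefficients `co u`. -/
def Eh {R : Type*} [CommRing R] (E : PowerSeries R) (eta : PowerSeries R) (co : ℕ → R)
    (d' : ℕ) : PowerSeries (PowerSeries R) :=
  ∏ u ∈ Finset.range (d' + 1), EmonoSub E eta (co u) u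

/-- The partial product `∏_{i<n} E_{f_i}(x, π_i)`. -/
def EfPartial {R : Type*} [CommRing R] (E : PowerSeries R) (Pi : ℕ → PowerSeries R)
    (co : ℕ → ℕ → R) (d : ℕ → ℕ) (n : ℕ) : PowerSeries (PowerSeries R) :=
  ∏ i ∈ Finset.range n, Eh E (Pi i) (co i) (d i)

/-- `Ef = E_f(x) = ∏_{i=0}^∞ E_{f_i}(x, π_i)`, as the `(p,T)`-adic limit of the partial
products: the `x^u`-coefficient of `E_f − ∏_{i<n} E_{f_i}` lies in `(p, T)^(n+1)`. -/
def IsEfProd (p : ℕ) {R : Type*} [CommRing R] (E : PowerSeries R) (Pi : ℕ → PowerSeries R)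
    (co : ℕ → ℕ → R) (d : ℕ → ℕ) (Ef : PowerSeries (PowerSeries R)) : Prop :=
  ∀ n u : ℕ,
    PowerSeries.coeff u Ef - PowerSeries.coeff u (EfPartial E Pi co d n)
      ∈ (Ideal.span {(p : PowerSeries R), PowerSeries.X}) ^ (n + 1)

/-- `ord_R(g) ≥ r`:  for `mt = 1` the `T`-adic order of `g` is at least `r`; for `mt ≥ 2`,
writing `g = Σ_j c_j T^j`, `min_j (ord_p(c_j)·p^(mt−2)(p−1) + j) ≥ r`
(the `(p^θ, T)`-adic order with `θ = 1/(p^(mt−2)(p−1))`, normalized by `ord_R(T) = 1`). -/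
def ordRge (p : ℕ) {R : Type*} [CommRing R] (mt : ℕ) (g : PowerSeries R) (r : ℚ) : Prop :=
  ∀ j n : ℕ, ¬ ((p : R) ^ (n + 1) ∣ PowerSeries.coeff j g) →
    (if mt = 1 then r ≤ (j : ℚ)
     else r ≤ (n : ℚ) * ((p : ℚ) ^ (mt - 2) * ((p : ℚ) - 1)) + (j : ℚ))


/-!
Comparing linear coefficients in `E(π_i) = (1+T)^(p^i)` gives `π_i ≡ p^i T (mod T²)`, using
`E ≡ 1 + X (mod X²)`. Since `π` has zero constant term and linear coefficient `1`, it is `T`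
times a unit, so `(T²) = (π²)` and `T ≡ π (mod π²)`.
-/

namespace PowerSeries

variable {R : Type*} [CommRing R]

lemma coeff_one_psComp (f g : R⟦X⟧) : coeff 1 (psComp f g) = coeff 1 f * coeff 1 g := by
  simp [psComp, Finset.sum_range_succ]

lemma associated_X_of_coeff_one_isUnit {π : R⟦X⟧} (h₀ : constantCoeff π = 0)
    (h₁ : IsUnit (coeff 1 π)) : Associated X π := by
  obtain ⟨u, rfl⟩ := X_dvd_iff.mpr h₀
  have hu : IsUnit u := by
    rw [isUnit_iff_constantCoeff, ← coeff_zero_eq_constantCoeff]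
    simpa [coeff_succ_X_mul] using h₁
  exact associated_mul_unit_right X u hu

lemma exists_eq_C_mul_add_sq_mul {π w : R⟦X⟧} (hπ₀ : constantCoeff π = 0)
    (hπ₁ : IsUnit (coeff 1 π)) (hw₀ : constantCoeff w = 0) {a : R}
    (hw₁ : coeff 1 w = a * coeff 1 π) : ∃ g, w = C a * π + π ^ 2 * g := by
  have hX : X ^ 2 ∣ w - C a * π := by
    rw [X_pow_dvd_iff]
    intro m hm
    interval_cases m <;> simp [hπ₀, hw₀, hw₁]
  obtain ⟨g, hg⟩ :=
    ((associated_X_of_coeff_one_isUnit hπ₀ hπ₁).pow_pow (n := 2)).dvd_iff_dvd_left.mp hX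
  exact ⟨g, eq_add_of_sub_eq' hg⟩

end PowerSeries

section ArtinHasse

variable {R : Type*} [CommRing R] {p : ℕ} {E : R⟦X⟧}

lemma IsArtinHasse.coeff_one (hE : IsArtinHasse p E) : coeff 1 E = 1 := by
  have h := congrArg (coeff 0) hE.2
  have hlog : constantCoeff (ahLogDeriv p R) = 1 := by
    rw [← coeff_zero_eq_constantCoeff, ahLogDeriv, coeff_mk, if_pos ⟨0, by simp⟩]
  simpa [coeff_derivative, hE.1, hlog] using h

lemma IsPiAH.coeff_one (hE : IsArtinHasse p E) {i : ℕ} {w : R⟦X⟧} (hw : IsPiAH p E i w) :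
    coeff 1 w = (p : R) ^ i := by
  simpa [coeff_one_psComp, hE.coeff_one, coeff_one_pow] using congrArg (coeff 1) hw.2

end ArtinHasse

/-- For every `i ≥ 0`, `π_i ∈ p^i·π + π²·ℤ_p[[π]]`. -/
theorem pi_i_eq_pPow_mul_pi_mod_sq (p : ℕ) [Fact p.Prime]
    (E : PowerSeries ℤ_[p]) (hE : IsArtinHasse p E)
    (pi0 : PowerSeries ℤ_[p]) (hpi0 : IsPiAH p E 0 pi0)
    (i : ℕ) (pii : PowerSeries ℤ_[p]) (hpii : IsPiAH p E i pii) :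
    ∃ g : PowerSeries ℤ_[p],
      pii = (p : PowerSeries ℤ_[p]) ^ i * pi0 + pi0 ^ 2 * g := by
  have hpi0₁ : coeff 1 pi0 = 1 := by simpa using hpi0.coeff_one hE
  have hpii₁ : coeff 1 pii = (p : ℤ_[p]) ^ i * coeff 1 pi0 := by
    rw [hpii.coeff_one hE, hpi0₁, mul_one]
  simpa using exists_eq_C_mul_add_sq_mul hpi0.1 (by simp [hpi0₁]) hpii.1 hpii₁

end
end

section
/- Write E_{f_i}(x, π_i) = Σ_{u≥0} α_u^{(i)} x^u, E_f(x) = ∏_{i=0}^∞ E_{f_i}(x, π_i) = Σ_{u≥0} α_u x^u, and ∏_{j=0}^{ak−1} E_f^{σ^j}(x^{p^j}) = Σ_{u≥0} β_{u,k} x^u, with all coefficients in ℤ_q[[π]]. Then ord_π(α_u^{(i)}) ≥ u/D, ord_π(α_u) ≥ u/D, and ord_π(β_{u,k}) ≥ u/(p^{ak−1} D) for all u ≥ 0. -/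
open PowerSeries
open scoped Classical

noncomputable section

/-- Substitution `x ↦ x^e` in a power series. -/
def psStretch {A : Type*} [CommRing A] (G : PowerSeries A) (e : ℕ) : PowerSeries A :=
  PowerSeries.mk fun v => if e ∣ v then PowerSeries.coeff (v / e) G else 0

/-- `E_f^{σ^j}(x^(p^j))`: apply the Witt Frobenius `σ^j` to all coefficients and substitute
`x ↦ x^(p^j)`. -/
def EfTwisted (p : ℕ) [Fact p.Prime] {F : Type*} [CommRing F]
    (Ef : PowerSeries (PowerSeries (WittVector p F))) (j : ℕ) :
    PowerSeries (PowerSeries (WittVector p F)) :=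
  psStretch
    (PowerSeries.map (PowerSeries.map
      ((WittVector.frobenius : WittVector p F →+* WittVector p F) ^ j)) Ef) (p ^ j)

/-- `∏_{j<ak} E_f^{σ^j}(x^(p^j)) = Σ_u β_{u,k} x^u`. -/
def betaProd (p : ℕ) [Fact p.Prime] {F : Type*} [CommRing F]
    (Ef : PowerSeries (PowerSeries (WittVector p F))) (ak : ℕ) :
    PowerSeries (PowerSeries (WittVector p F)) :=
  ∏ j ∈ Finset.range ak, EfTwisted p Ef j

/-!
The `x^u`-coefficient of `E(π ĥ x^e)` vanishes unless `u = e v`, and is then a multiple of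
`π^v`; as `π` has `T`-adic order `≥ 1` and `e ≤ D`, its `T`-adic order is at least `u / D`.
The property "the `x^u`-coefficient has `T`-adic order `≥ u / M` for all `u`" is closed under
products, so it holds for each `E_{f_i}` and every partial product of `E_f`. It passes to
`E_f` itself because the partial products converge `(p, T)`-adically and `W(𝔽_q)` is
`p`-adically separated. Finally `x ↦ x^(p^j)` multiplies the slope `M` by `p^j ≤ p^(ak−1)`,
while Frobenius on the coefficients does not affect it.
-/

namespace WittVector

theorem eq_zero_of_forall_p_pow_dvd {p : ℕ} [Fact p.Prime] {k : Type*} [CommRing k] [CharP k p]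
    {x : WittVector p k} (h : ∀ m : ℕ, (p : WittVector p k) ^ m ∣ x) : x = 0 := by
  ext i
  obtain ⟨y, rfl⟩ := h (i + 1)
  rw [mul_comm, mul_pow_charP_coeff_zero y (Nat.lt_succ_self i), zero_coeff]

end WittVector

namespace PowerSeries

variable {R : Type*} [CommRing R]

theorem coeff_pow_eq_zero_of_constantCoeff_eq_zero {η : R⟦X⟧} (hη : constantCoeff η = 0)
    {j m : ℕ} (hjm : j < m) : coeff j (η ^ m) = 0 :=
  coeff_of_lt_order j ((Nat.cast_lt.2 hjm).trans_le (le_order_pow_of_constantCoeff_eq_zero m hη))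

theorem pow_dvd_coeff_of_mem_span_C_X_pow (P : R) {n : ℕ} {g : R⟦X⟧}
    (hg : g ∈ Ideal.span {C P, X} ^ n) (j : ℕ) : P ^ (n - j) ∣ coeff j g := by
  induction n generalizing g j with
  | zero => simp
  | succ n ih =>
    rw [pow_succ] at hg
    revert j
    refine Submodule.mul_induction_on hg (fun x hx y hy j => ?_) (fun x y hx hy j => ?_)
    · obtain ⟨α, β, rfl⟩ := Ideal.mem_span_pair.1 hy
      rw [show x * (α * C P + β * X) = C P * (x * α) + X * (x * β) by ring, map_add,
        coeff_C_mul]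
      refine dvd_add ?_ ?_
      · refine (pow_dvd_pow P (by omega : n + 1 - j ≤ n - j + 1)).trans ?_
        rw [pow_succ']
        exact mul_dvd_mul_left P (ih (Ideal.mul_mem_right α _ hx) j)
      · cases j with
        | zero => simp
        | succ i =>
          rw [coeff_succ_X_mul]
          exact (pow_dvd_pow P (by omega)).trans (ih (Ideal.mul_mem_right β _ hx) i)
    · rw [map_add]
      exact dvd_add (hx j) (hy j)

end PowerSeries

section CoeffOrder

variable {R : Type*} [CommRing R]

/-- `M · ord_T (coeff u φ) ≥ u` for every `u`, phrased without `ℕ∞`. -/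
def CoeffOrderGe (M : ℕ) (φ : PowerSeries (PowerSeries R)) : Prop :=
  ∀ u j : ℕ, M * j < u → PowerSeries.coeff j (PowerSeries.coeff u φ) = 0

theorem coeffOrderGe_one (M : ℕ) : CoeffOrderGe (R := R) M 1 := by
  intro u j h
  rw [PowerSeries.coeff_one, if_neg (by omega), map_zero]

namespace CoeffOrderGe

variable {M : ℕ} {φ ψ : PowerSeries (PowerSeries R)}

theorem mono {N : ℕ} (h : CoeffOrderGe M φ) (hMN : M ≤ N) : CoeffOrderGe N φ :=
  fun u j hj => h u j ((Nat.mul_le_mul_right j hMN).trans_lt hj)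

theorem mul (hφ : CoeffOrderGe M φ) (hψ : CoeffOrderGe M ψ) : CoeffOrderGe M (φ * ψ) := by
  intro u j h
  rw [PowerSeries.coeff_mul, map_sum]
  refine Finset.sum_eq_zero fun ⟨x, y⟩ hxy => ?_
  simp only [Finset.HasAntidiagonal.mem_antidiagonal] at hxy
  rw [PowerSeries.coeff_mul]
  refine Finset.sum_eq_zero fun ⟨j₁, j₂⟩ hj => ?_
  simp only [Finset.HasAntidiagonal.mem_antidiagonal] at hj
  by_cases h₁ : M * j₁ < x
  · rw [hφ x j₁ h₁, zero_mul]
  · have h₂ : M * j₂ < y := by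
      subst hxy hj
      rw [mul_add] at h
      omega
    rw [hψ y j₂ h₂, mul_zero]

theorem prod {ι : Type*} (s : Finset ι) {f : ι → PowerSeries (PowerSeries R)}
    (h : ∀ i ∈ s, CoeffOrderGe M (f i)) : CoeffOrderGe M (∏ i ∈ s, f i) :=
  Finset.prod_induction f (CoeffOrderGe M) (fun _ _ => mul) (coeffOrderGe_one M) h

theorem map {S : Type*} [CommRing S] (h : CoeffOrderGe M φ) (f : R →+* S) :
    CoeffOrderGe M (PowerSeries.map (PowerSeries.map f) φ) := by
  intro u j hj
  rw [PowerSeries.coeff_map, PowerSeries.coeff_map, h u j hj, map_zero]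

theorem psStretch (h : CoeffOrderGe M φ) (e : ℕ) : CoeffOrderGe (e * M) (psStretch φ e) := by
  intro v j hj
  rw [_root_.psStretch, PowerSeries.coeff_mk]
  split_ifs with he
  · rw [h _ j ((Nat.lt_div_iff_mul_lt' he _).2 (by rwa [← mul_assoc]))]
  · rfl

theorem le_mul_order (h : CoeffOrderGe M φ) (hM : M ≠ 0) (u : ℕ) :
    (u : ℕ∞) ≤ M * (PowerSeries.coeff u φ).order := by
  by_cases hg : PowerSeries.coeff u φ = 0
  · rw [hg, PowerSeries.order_zero, ENat.mul_top (by exact_mod_cast hM)]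
    exact le_top
  obtain ⟨o, ho⟩ := ENat.ne_top_iff_exists.1 (PowerSeries.order_finite_iff_ne_zero.2 hg).ne
  have hcoeff := (PowerSeries.order_eq_nat.1 ho.symm).1
  rw [← ho]
  exact_mod_cast not_lt.1 fun hlt => hcoeff (h u o hlt)

end CoeffOrderGe

theorem coeffOrderGe_EmonoSub (E : PowerSeries R) {η : PowerSeries R}
    (hη : PowerSeries.constantCoeff η = 0) (cst : R) {e M : ℕ} (he : e ≤ M) :
    CoeffOrderGe M (EmonoSub E η cst e) := by
  intro v j hj
  by_cases h0 : e = 0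
  · rw [EmonoSub, if_pos h0, PowerSeries.coeff_C, if_neg (by omega), map_zero]
  rw [EmonoSub, if_neg h0, PowerSeries.coeff_mk]
  split_ifs with hdvd
  · have hjv : j < v / e :=
      (Nat.lt_div_iff_mul_lt' hdvd j).2 ((Nat.mul_le_mul_right j he).trans_lt hj)
    rw [PowerSeries.coeff_C_mul,
      PowerSeries.coeff_pow_eq_zero_of_constantCoeff_eq_zero hη hjv, mul_zero]
  · rfl

theorem coeffOrderGe_Eh (E : PowerSeries R) {η : PowerSeries R}
    (hη : PowerSeries.constantCoeff η = 0) (co : ℕ → R) {d' M : ℕ} (hd : d' ≤ M) :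
    CoeffOrderGe M (Eh E η co d') :=
  CoeffOrderGe.prod _ fun _ he =>
    coeffOrderGe_EmonoSub E hη _ ((Nat.lt_succ_iff.1 (Finset.mem_range.1 he)).trans hd)

theorem coeffOrderGe_EfPartial (E : PowerSeries R) {Pi : ℕ → PowerSeries R}
    (hPi : ∀ i, PowerSeries.constantCoeff (Pi i) = 0) (co : ℕ → ℕ → R) {d : ℕ → ℕ} {M : ℕ}
    (hd : ∀ i, d i ≤ M) (n : ℕ) : CoeffOrderGe M (EfPartial E Pi co d n) :=
  CoeffOrderGe.prod _ fun i _ => coeffOrderGe_Eh E (hPi i) (co i) (hd i)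

theorem IsEfProd.coeffOrderGe {p M : ℕ} {E : PowerSeries R} {Pi : ℕ → PowerSeries R}
    {co : ℕ → ℕ → R} {d : ℕ → ℕ} {Ef : PowerSeries (PowerSeries R)}
    (hEf : IsEfProd p E Pi co d Ef) (hsep : ∀ x : R, (∀ m, (p : R) ^ m ∣ x) → x = 0)
    (hpart : ∀ n, CoeffOrderGe M (EfPartial E Pi co d n)) : CoeffOrderGe M Ef := by
  intro u j hj
  refine hsep _ fun m => ?_
  have hmem := hEf (j + m) u
  rw [← map_natCast PowerSeries.C p] at hmem
  have hdvd := PowerSeries.pow_dvd_coeff_of_mem_span_C_X_pow (p : R) hmem j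
  rw [map_sub, hpart (j + m) u j hj, sub_zero] at hdvd
  exact (pow_dvd_pow _ (by omega)).trans hdvd

theorem CoeffOrderGe.betaProd {p : ℕ} [Fact p.Prime] {F : Type*} [CommRing F] {M : ℕ}
    {Ef : PowerSeries (PowerSeries (WittVector p F))} (h : CoeffOrderGe M Ef) (n : ℕ) :
    CoeffOrderGe (p ^ (n - 1) * M) (_root_.betaProd p Ef n) :=
  CoeffOrderGe.prod _ fun j hj =>
    ((h.map _).psStretch (p ^ j)).mono <| Nat.mul_le_mul_right M <|
      Nat.pow_le_pow_right (Fact.out : p.Prime).pos (by have := Finset.mem_range.1 hj; omega)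

end CoeffOrder

theorem Ef_coefficients_order_bounds_general (p a k : ℕ) [Fact p.Prime]
    (Fq : Type) [Field Fq] [CharP Fq p]
    (E : PowerSeries ℤ_[p])
    (Pi : ℕ → PowerSeries ℤ_[p]) (hPi : ∀ i, IsPiAH p E i (Pi i))
    (d : ℕ → ℕ) (c : ℕ → ℕ → Fq) (hd0 : 0 < d 0)
    (D : ℕ) (hD : IsGreatest (Set.range d) D)
    (Ef : PowerSeries (PowerSeries (WittVector p Fq)))
    (hEf : IsEfProd p (PowerSeries.map (toWitt p Fq) E)
      (fun i => PowerSeries.map (toWitt p Fq) (Pi i))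
      (fun i u => WittVector.teichmuller p (c i u)) d Ef) :
    (∀ i u : ℕ, (u : ℕ∞) ≤ (D : ℕ∞) *
        PowerSeries.order (PowerSeries.coeff u
          (Eh (PowerSeries.map (toWitt p Fq) E) (PowerSeries.map (toWitt p Fq) (Pi i))
            (fun u => WittVector.teichmuller p (c i u)) (d i)))) ∧
      (∀ u : ℕ, (u : ℕ∞) ≤ (D : ℕ∞) *
        PowerSeries.order (PowerSeries.coeff u Ef)) ∧
      (∀ u : ℕ, (u : ℕ∞) ≤ ((p ^ (a * k - 1) * D : ℕ) : ℕ∞) *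
        PowerSeries.order (PowerSeries.coeff u (betaProd p Ef (a * k)))) := by
  have hD0 : D ≠ 0 := (hd0.trans_le (hD.2 ⟨0, rfl⟩)).ne'
  have hdD : ∀ i, d i ≤ D := fun i => hD.2 ⟨i, rfl⟩
  have hη : ∀ i, PowerSeries.constantCoeff (PowerSeries.map (toWitt p Fq) (Pi i)) = 0 := by
    intro i
    rw [← PowerSeries.coeff_zero_eq_constantCoeff_apply, PowerSeries.coeff_map,
      PowerSeries.coeff_zero_eq_constantCoeff_apply, (hPi i).1, map_zero]
  have hEfD : CoeffOrderGe D Ef :=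
    hEf.coeffOrderGe (fun _ => WittVector.eq_zero_of_forall_p_pow_dvd)
      (coeffOrderGe_EfPartial _ hη _ hdD)
  have hp : 0 < p := (Fact.out : p.Prime).pos
  refine ⟨fun i => (coeffOrderGe_Eh _ (hη i) _ (hdD i)).le_mul_order hD0,
    hEfD.le_mul_order hD0, ?_⟩
  exact_mod_cast (hEfD.betaProd (a * k)).le_mul_order (by positivity)

/-- With `E_{f_i}(x,π_i) = Σ_u α_u^{(i)} x^u`, `E_f(x) = Σ_u α_u x^u` and
`∏_{j<ak} E_f^{σ^j}(x^(p^j)) = Σ_u β_{u,k} x^u`, one has `ord_π(α_u^{(i)}) ≥ u/D`,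
`ord_π(α_u) ≥ u/D` and `ord_π(β_{u,k}) ≥ u/(p^(ak−1) D)` (stated as
`D·ord ≥ u`, resp. `p^(ak−1)·D·ord ≥ u`). -/
theorem Ef_coefficients_order_bounds (p a k : ℕ) [Fact p.Prime] (ha : 1 ≤ a) (hk : 1 ≤ k)
    (Fq : Type) [Field Fq] [Fintype Fq] [CharP Fq p] (hq : Fintype.card Fq = p ^ a)
    (E : PowerSeries ℤ_[p]) (hE : IsArtinHasse p E)
    (Pi : ℕ → PowerSeries ℤ_[p]) (hPi : ∀ i, IsPiAH p E i (Pi i))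
    (d : ℕ → ℕ) (c : ℕ → ℕ → Fq) (hd0 : 0 < d 0)
    (hlead : ∀ i, 0 < d i → c i (d i) ≠ 0) (hctop : ∀ i u, d i < u → c i u = 0)
    (D : ℕ) (hD : IsGreatest (Set.range d) D)
    (Ef : PowerSeries (PowerSeries (WittVector p Fq)))
    (hEf : IsEfProd p (PowerSeries.map (toWitt p Fq) E)
      (fun i => PowerSeries.map (toWitt p Fq) (Pi i))
      (fun i u => WittVector.teichmuller p (c i u)) d Ef) :
    (∀ i u : ℕ, (u : ℕ∞) ≤ (D : ℕ∞) *
        PowerSeries.order (PowerSeries.coeff u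
          (Eh (PowerSeries.map (toWitt p Fq) E) (PowerSeries.map (toWitt p Fq) (Pi i))
            (fun u => WittVector.teichmuller p (c i u)) (d i)))) ∧
      (∀ u : ℕ, (u : ℕ∞) ≤ (D : ℕ∞) *
        PowerSeries.order (PowerSeries.coeff u Ef)) ∧
      (∀ u : ℕ, (u : ℕ∞) ≤ ((p ^ (a * k - 1) * D : ℕ) : ℕ∞) *
        PowerSeries.order (PowerSeries.coeff u (betaProd p Ef (a * k)))) :=
  Ef_coefficients_order_bounds_general p a k Fq E Pi hPi d c hd0 D hD Ef hEf

end
end
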